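/- Let R be a right-reduced TRS and let s be an R-reducible term that is minimal with respect to proper encompassment among reducible terms. If s →_R^+ t then s → t is a variant (up to renaming) of a rule in R. -/

import Mathlib

namespace KB

-- Generic ARS notions
def NF {α : Type _} (r : α → α → Prop) (a : α) : Prop := ∀ b, ¬ r a b

def SymmCl {α : Type _} (r : α → α → Prop) (a b : α) : Prop := r a b ∨ r b a

def Conv {α : Type _} (r : α → α → Prop) : α → α → Prop :=
  Relation.ReflTransGen (SymmCl r)

def Joinable {α : Type _} (r : α → α → Prop) (a b : α) : Prop :=
  ∃ c, Relation.ReflTransGen r a c ∧ Relation.ReflTransGen r b c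

def Confluent {α : Type _} (r : α → α → Prop) : Prop :=
  ∀ a b c, Relation.ReflTransGen r a b → Relation.ReflTransGen r a c → Joinable r b c

def Terminating {α : Type _} (r : α → α → Prop) : Prop :=
  WellFounded (fun a b => r b a)

def Complete {α : Type _} (r : α → α → Prop) : Prop := Terminating r ∧ Confluent r

def NormTo {α : Type _} (r : α → α → Prop) (a b : α) : Prop :=
  Relation.ReflTransGen r a b ∧ NF r b

-- First-order terms
inductive Term (F V : Type) : Type where
  | var : V → Term F V
  | app : F → List (Term F V) → Term F V

variable {F V : Type}

def Term.subst (σ : V → Term F V) : Term F V → Term F V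
  | .var x => σ x
  | .app f ts => .app f (ts.attach.map fun t => Term.subst σ t.1)
decreasing_by
  simp only [Term.app.sizeOf_spec]
  have := List.sizeOf_lt_of_mem t.2
  omega

def Term.rename (π : V → V) (t : Term F V) : Term F V :=
  t.subst (fun x => Term.var (π x))

inductive Ctx (F V : Type) : Type where
  | hole : Ctx F V
  | cons : F → List (Term F V) → Ctx F V → List (Term F V) → Ctx F V

def Ctx.fill : Ctx F V → Term F V → Term F V
  | .hole, t => t
  | .cons f l C r, t => Term.app f (l ++ C.fill t :: r)

abbrev TRS (F V : Type) := Set (Term F V × Term F V)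

def Step (R : TRS F V) (s t : Term F V) : Prop :=
  ∃ (C : Ctx F V) (σ : V → Term F V) (l r : Term F V),
    (l, r) ∈ R ∧ s = C.fill (l.subst σ) ∧ t = C.fill (r.subst σ)

inductive InVars (x : V) : Term F V → Prop where
  | var : InVars x (Term.var x)
  | app {f : F} {ts : List (Term F V)} {t : Term F V} :
      t ∈ ts → InVars x t → InVars x (Term.app f ts)

def WellFormedRule (l r : Term F V) : Prop :=
  (∀ x : V, l ≠ Term.var x) ∧ ∀ x, InVars x r → InVars x l

def IsTRS (R : TRS F V) : Prop := ∀ p ∈ R, WellFormedRule p.1 p.2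

inductive Ground : Term F V → Prop where
  | app {f : F} {ts : List (Term F V)} : (∀ t ∈ ts, Ground t) → Ground (Term.app f ts)

def GroundSys (R : TRS F V) : Prop := ∀ p ∈ R, Ground p.1 ∧ Ground p.2

def LeftReduced (R : TRS F V) : Prop := ∀ p ∈ R, NF (Step (R \ {p})) p.1
def RightReduced (R : TRS F V) : Prop := ∀ p ∈ R, NF (Step R) p.2
def Reduced (R : TRS F V) : Prop := LeftReduced R ∧ RightReduced R

def RuleVariant (p q : Term F V × Term F V) : Prop :=
  ∃ π : V → V, Function.Bijective π ∧ p.1 = q.1.rename π ∧ p.2 = q.2.rename π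

def LitSim (R S : TRS F V) : Prop :=
  (∀ p ∈ R, ∃ q ∈ S, RuleVariant p q) ∧ (∀ q ∈ S, ∃ p ∈ R, RuleVariant q p)

def Encompass (s t : Term F V) : Prop :=
  ∃ (C : Ctx F V) (σ : V → Term F V), s = C.fill (t.subst σ)

def PEncompass (s t : Term F V) : Prop := Encompass s t ∧ ¬ Encompass t s

def ReductionOrder (gt : Term F V → Term F V → Prop) : Prop :=
  Transitive gt ∧ WellFounded (fun a b => gt b a) ∧
  (∀ (C : Ctx F V) s t, gt s t → gt (C.fill s) (C.fill t)) ∧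
  (∀ (σ : V → Term F V) s t, gt s t → gt (s.subst σ) (t.subst σ))

-- positions
def subt : List ℕ → Term F V → Option (Term F V)
  | [], t => some t
  | _ :: _, Term.var _ => none
  | i :: p, Term.app _ ts => (ts[i]?).bind (subt p)

def repl : List ℕ → Term F V → Term F V → Option (Term F V)
  | [], _, u => some u
  | _ :: _, Term.var _, _ => none
  | i :: p, Term.app f ts, u =>
      (ts[i]?).bind fun w => (repl p w u).map fun w' => Term.app f (ts.set i w')

def FunPos (p : List ℕ) (t : Term F V) : Prop :=
  ∃ f ts, subt p t = some (Term.app f ts)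

def Unifier (σ : V → Term F V) (s t : Term F V) : Prop := s.subst σ = t.subst σ

def IsMGU (σ : V → Term F V) (s t : Term F V) : Prop :=
  Unifier σ s t ∧ ∀ τ, Unifier τ s t → ∃ ρ, ∀ x, (σ x).subst ρ = τ x

def VarsDisjoint (p q : Term F V × Term F V) : Prop :=
  ∀ x, ¬ ((InVars x p.1 ∨ InVars x p.2) ∧ (InVars x q.1 ∨ InVars x q.2))

def Overlap (R : TRS F V) (l1 r1 : Term F V) (p : List ℕ) (l2 r2 : Term F V) : Prop :=
  (∃ q ∈ R, RuleVariant (l1, r1) q) ∧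
  (∃ q ∈ R, RuleVariant (l2, r2) q) ∧
  VarsDisjoint (l1, r1) (l2, r2) ∧
  FunPos p l2 ∧
  (∃ w, subt p l2 = some w ∧ ∃ σ, Unifier σ l1 w) ∧
  (p = [] → ¬ RuleVariant (l1, r1) (l2, r2))

def CPeak (R : TRS F V) (t : Term F V) (p : List ℕ) (s u : Term F V) : Prop :=
  ∃ (l1 r1 l2 r2 : Term F V) (σ : V → Term F V) (w : Term F V),
    Overlap R l1 r1 p l2 r2 ∧ subt p l2 = some w ∧ IsMGU σ l1 w ∧
    s = l2.subst σ ∧ u = r2.subst σ ∧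
    repl p (l2.subst σ) (r1.subst σ) = some t

def PrimeCPeak (R : TRS F V) (t : Term F V) (p : List ℕ) (s u : Term F V) : Prop :=
  CPeak R t p s u ∧
  ∀ w v, subt p s = some w → (∃ q, q ≠ [] ∧ subt q w = some v) → NF (Step R) v

def PCP (R : TRS F V) : Set (Term F V × Term F V) :=
  { e | ∃ p s, PrimeCPeak R e.1 p s e.2 }

def Nabla (R : TRS F V) (s u w : Term F V) : Prop :=
  Relation.TransGen (Step R) s u ∧ Relation.TransGen (Step R) s w ∧
  (Joinable (Step R) u w ∨ SymmCl (Step (PCP R)) u w)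

-- counted conversions and rewrite sequences
inductive ConvN {α : Type _} (r : α → α → Prop) : ℕ → ℕ → α → α → Prop where
  | refl (a : α) : ConvN r 0 0 a a
  | fwd {l n : ℕ} {a b c : α} : r a b → ConvN r l n b c → ConvN r l (n + 1) a c
  | bwd {l n : ℕ} {a b c : α} : r b a → ConvN r l n b c → ConvN r (l + 1) n a c

inductive StepsN {α : Type _} (r : α → α → Prop) : ℕ → α → α → Prop where
  | refl (a : α) : StepsN r 0 a a
  | step {n : ℕ} {a b c : α} : r a b → StepsN r n b c → StepsN r (n + 1) a c

def RandomDescent {α : Type _} (r : α → α → Prop) : Prop :=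
  ∀ l m a b, ConvN r l m a b → NF r b → ∃ n, StepsN r n a b ∧ n + l = m

/-! The first rewrite step of `s →⁺ t` contracts an instance `lσ` of a left-hand side inside `s`.
As `l` is reducible, minimality forbids `s ⊳ l`, so `s` and `l` encompass each other. Comparing
sizes, the context is empty and `σ` has a left inverse on the variables of `l`, so `σ` renames
these variables injectively and `s → rσ` is a variant of `l → r`. Right-reducedness makes `rσ`
a normal form, hence it is `t`. -/

theorem NF.eq_of_reflTransGen {α : Type*} {r : α → α → Prop} {a b : α} (ha : NF r a)
    (hab : Relation.ReflTransGen r a b) : b = a := by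
  rcases Relation.ReflTransGen.cases_head hab with rfl | ⟨c, hac, -⟩
  · rfl
  · exact absurd hac (ha c)

theorem Function.Embedding.exists_equiv_extend {α : Type*} {s : Set α} [Finite s] (f : s ↪ α) :
    ∃ g : α ≃ α, ∀ x : s, g x = f x := by
  cases finite_or_infinite α
  · exact Cardinal.extend_function_finite f ⟨Equiv.refl α⟩
  · refine Cardinal.extend_function f (Cardinal.eq.1 (Cardinal.mk_compl_eq_mk_compl_infinite ?_ ?_))
    all_goals exact (Cardinal.lt_aleph0_of_finite _).trans_le (Cardinal.aleph0_le_mk α)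

@[induction_eliminator]
theorem Term.induction {P : Term F V → Prop} (var : ∀ x, P (.var x))
    (app : ∀ f ts, (∀ t ∈ ts, P t) → P (.app f ts)) : ∀ t, P t
  | .var x => var x
  | .app f ts => app f ts fun t _ => Term.induction var app t

namespace Term

def size : Term F V → ℕ
  | .var _ => 1
  | .app _ ts => 1 + (ts.map size).sum

@[simp] theorem subst_var (σ : V → Term F V) (x : V) : (var x).subst σ = σ x := by
  rw [Term.subst]

@[simp] theorem subst_app (σ : V → Term F V) (f : F) (ts : List (Term F V)) :
    (app f ts).subst σ = app f (ts.map (Term.subst σ)) := by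
  rw [Term.subst]; simp

theorem subst_var_eq_self (t : Term F V) : t.subst var = t := by
  induction t with
  | var x => simp
  | app f ts ih => simpa using List.map_congr_left ih

theorem subst_subst (σ τ : V → Term F V) (t : Term F V) :
    (t.subst σ).subst τ = t.subst fun x => (σ x).subst τ := by
  induction t with
  | var x => simp
  | app f ts ih => simpa using List.map_congr_left ih

theorem subst_congr {σ τ : V → Term F V} {t : Term F V} (h : ∀ x, InVars x t → σ x = τ x) :
    t.subst σ = t.subst τ := by
  induction t with
  | var x => simpa using h x .var
  | app f ts ih =>
    simpa using List.map_congr_left fun u hu => ih u hu fun x hx => h x (.app hu hx)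

theorem eq_var_of_subst_eq_self {σ : V → Term F V} {t : Term F V} (h : t.subst σ = t) :
    ∀ x, InVars x t → σ x = var x := by
  induction t with
  | var x => rintro y ⟨⟩; simpa using h
  | app f ts ih =>
    intro y hy
    simp only [subst_app, app.injEq] at h
    cases hy with
    | app hu hyu =>
      exact ih _ hu (List.map_eq_map_iff.1 (h.2.trans (List.map_id ts).symm) _ hu) y hyu

theorem finite_setOf_inVars (t : Term F V) : {x | InVars x t}.Finite := by
  induction t with
  | var x => exact (Set.finite_singleton x).subset fun y (hy : InVars y _) => by cases hy; rfl
  | app f ts ih =>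
    refine (ts.finite_toSet.biUnion ih).subset fun y (hy : InVars y _) => ?_
    cases hy with
    | app hu hyu => exact Set.mem_biUnion hu hyu

@[simp] theorem size_var (x : V) : (var x : Term F V).size = 1 := by
  rw [Term.size]

@[simp] theorem size_app (f : F) (ts : List (Term F V)) :
    (app f ts).size = 1 + (ts.map Term.size).sum := by
  rw [Term.size]

theorem one_le_size (t : Term F V) : 1 ≤ t.size := by
  cases t <;> simp

theorem size_le_size_subst (σ : V → Term F V) (t : Term F V) : t.size ≤ (t.subst σ).size := by
  induction t with
  | var x => simpa using one_le_size (σ x)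
  | app f ts ih =>
    simpa [Function.comp_def] using List.sum_le_sum fun u hu => ih u hu

theorem rename_symm_rename (π : V ≃ V) (t : Term F V) : (t.rename π).rename π.symm = t := by
  simp only [rename, subst_subst, subst_var, Equiv.symm_apply_apply, subst_var_eq_self]

theorem exists_equiv_eq_var_of_subst_subst_eq_self {σ τ : V → Term F V} {t : Term F V}
    (h : (t.subst σ).subst τ = t) : ∃ π : V ≃ V, ∀ x, InVars x t → σ x = var (π x) := by
  have hστ := eq_var_of_subst_eq_self ((subst_subst σ τ t).symm.trans h)
  have hvar : ∀ x : {x | InVars x t}, ∃ y, σ x = var y ∧ τ y = var x.1 := by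
    rintro ⟨x, hx⟩
    have := hστ x hx
    cases hσ : σ x with
    | var y => exact ⟨y, rfl, by simpa [hσ] using this⟩
    | app f ts => simp [hσ] at this
  choose f hf using hvar
  have hinj : Function.Injective f := fun a b hab =>
    Subtype.ext (var.inj (by rw [← (hf a).2, ← (hf b).2, hab]))
  have : Finite {x | InVars x t} := (finite_setOf_inVars t).to_subtype
  obtain ⟨π, hπ⟩ := Function.Embedding.exists_equiv_extend ⟨f, hinj⟩
  exact ⟨π, fun x hx => by rw [hπ ⟨x, hx⟩]; exact (hf ⟨x, hx⟩).1⟩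

end Term

namespace Ctx

def subst (σ : V → Term F V) : Ctx F V → Ctx F V
  | .hole => .hole
  | .cons f l C r => .cons f (l.map (Term.subst σ)) (C.subst σ) (r.map (Term.subst σ))

theorem fill_subst (σ : V → Term F V) (C : Ctx F V) (t : Term F V) :
    (C.fill t).subst σ = (C.subst σ).fill (t.subst σ) := by
  induction C with
  | hole => rfl
  | cons f l C r ih => simp [fill, subst, ih]

theorem size_le_size_fill (C : Ctx F V) (t : Term F V) : t.size ≤ (C.fill t).size := by
  induction C with
  | hole => rfl
  | cons f l C r ih => simp only [fill, Term.size_app, List.map_append, List.map_cons,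
      List.sum_append, List.sum_cons]; omega

theorem eq_hole_of_size_fill_le {C : Ctx F V} {t : Term F V} (h : (C.fill t).size ≤ t.size) :
    C = .hole := by
  cases C with
  | hole => rfl
  | cons f l C r =>
    have := size_le_size_fill C t
    simp only [fill, Term.size_app, List.map_append, List.map_cons, List.sum_append,
      List.sum_cons] at h
    omega

end Ctx

theorem eq_hole_and_subst_subst_eq_self_of_encompass {C : Ctx F V} {σ : V → Term F V}
    {t : Term F V} (h : Encompass t (C.fill (t.subst σ))) :
    C = .hole ∧ ∃ τ, (t.subst σ).subst τ = t := by
  obtain ⟨D, τ, hD⟩ := h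
  have h₁ := Ctx.size_le_size_fill D ((C.fill (t.subst σ)).subst τ)
  have h₂ := Term.size_le_size_subst τ (C.fill (t.subst σ))
  have h₄ := Term.size_le_size_subst σ t
  rw [← hD] at h₁
  obtain rfl := Ctx.eq_hole_of_size_fill_le (h₂.trans (h₁.trans h₄))
  obtain rfl : D = .hole := Ctx.eq_hole_of_size_fill_le (by rw [← hD]; exact h₄.trans h₂)
  exact ⟨rfl, τ, hD.symm⟩

theorem Step.of_mem {R : TRS F V} {l r : Term F V} (h : (l, r) ∈ R) : Step R l r :=
  ⟨.hole, .var, l, r, h, (l.subst_var_eq_self).symm, (r.subst_var_eq_self).symm⟩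

theorem Step.subst {R : TRS F V} {a b : Term F V} (μ : V → Term F V) (h : Step R a b) :
    Step R (a.subst μ) (b.subst μ) := by
  obtain ⟨C, σ, l, r, hlr, rfl, rfl⟩ := h
  exact ⟨C.subst μ, fun x => (σ x).subst μ, l, r, hlr,
    by rw [Ctx.fill_subst, Term.subst_subst], by rw [Ctx.fill_subst, Term.subst_subst]⟩

theorem NF.rename {R : TRS F V} {u : Term F V} (hu : NF (Step R) u) (π : V ≃ V) :
    NF (Step R) (u.rename π) := by
  intro w hw
  have := hw.subst fun x => .var (π.symm x)
  rw [← Term.rename, Term.rename_symm_rename] at this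
  exact hu _ this

theorem right_reduced_minimal_step_rule_general {F V : Type} (R : TRS F V) (hTRS : IsTRS R)
    (hRR : RightReduced R) (s t : Term F V)
    (hmin : ∀ u, PEncompass s u → NF (Step R) u)
    (hst : Relation.TransGen (Step R) s t) :
    ∃ q ∈ R, RuleVariant (s, t) q := by
  obtain ⟨u, ⟨C, σ, l, r, hlr, rfl, rfl⟩, hut⟩ := Relation.TransGen.head'_iff.mp hst
  have hl : Encompass l (C.fill (l.subst σ)) := by
    by_contra hl
    exact hmin l ⟨⟨C, σ, rfl⟩, hl⟩ r (Step.of_mem hlr)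
  obtain ⟨rfl, τ, hτ⟩ := eq_hole_and_subst_subst_eq_self_of_encompass hl
  obtain ⟨π, hπ⟩ := Term.exists_equiv_eq_var_of_subst_subst_eq_self hτ
  have hs : l.subst σ = l.rename π := Term.subst_congr hπ
  have hr : r.subst σ = r.rename π := Term.subst_congr fun x hx => hπ x ((hTRS _ hlr).2 x hx)
  obtain rfl : t = r.subst σ := (hr ▸ (hRR _ hlr).rename π).eq_of_reflTransGen hut
  exact ⟨(l, r), hlr, π, π.bijective, hs, hr⟩

/-- For a right-reduced TRS, a reducible term minimal w.r.t. proper encompassment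
rewrites in one or more steps only to variants of rules. -/
theorem right_reduced_minimal_step_rule {F V : Type} (R : TRS F V) (hTRS : IsTRS R)
    (hRR : RightReduced R) (s t : Term F V)
    (hred : ¬ NF (Step R) s)
    (hmin : ∀ u, PEncompass s u → NF (Step R) u)
    (hst : Relation.TransGen (Step R) s t) :
    ∃ q ∈ R, RuleVariant (s, t) q :=
  right_reduced_minimal_step_rule_general R hTRS hRR s t hmin hst

end KB
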